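/- arXiv:0906.1149 — 3 statements merged into one kernel-verified Lean document; each statement's English description precedes it below -/
import Mathlib

section
/- Let G be a group with subgroups H and K, and let X ⊆ G satisfy: Xg is K-almost equal to X for all g ∈ G, and X is H-finite. Then either X is K-finite or H has finite index in G. -/
open scoped Pointwise

/-- A subset `A` of `G` is `L`-finite if it is contained in finitely many
right cosets `Lg` of the subgroup `L`. -/
def HFinite {G : Type*} [Group G] (L : Subgroup G) (A : Set G) : Prop :=
  ∃ F : Finset G, A ⊆ ⋃ g ∈ F, ((L : Set G) * {g} : Set G)

theorem hfin_mono {G : Type*} [Group G] {L : Subgroup G} {A B : Set G}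
    (h : A ⊆ B) (hB : HFinite L B) : HFinite L A := by
  obtain ⟨F, hF⟩ := hB; exact ⟨F, h.trans hF⟩

/-- Lemma 2.13 of Scott–Swarup. -/
theorem KFinite_or_finiteIndex {G : Type*} [Group G] (H K : Subgroup G) (X : Set G)
    (hae : ∀ g : G, HFinite K ((X \ ((X * {g} : Set G))) ∪ (((X * {g} : Set G)) \ X)))
    (hX : HFinite H X) :
    HFinite K X ∨ H.FiniteIndex := by
  classical
  obtain ⟨F, hF⟩ := hX
  by_cases hcov : (⋃ p ∈ F ×ˢ F, (p.1⁻¹ * p.2) •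
      ((H.map (MulAut.conj p.2⁻¹).toMonoidHom : Subgroup G) : Set G)) = Set.univ
  · right
    obtain ⟨p, hp, hfi⟩ := Subgroup.exists_finiteIndex_of_leftCoset_cover hcov
    have heq : (H.map (MulAut.conj p.2⁻¹).toMonoidHom).index = H.index :=
      Subgroup.index_map_eq _ (MulEquiv.surjective _) (by
        intro x hx
        have h1 : p.2⁻¹ * x * p.2 = 1 := by simpa using hx
        have hx1 : x = 1 := by
          have h2 := congrArg (fun y => p.2 * y * p.2⁻¹) h1
          simpa [mul_assoc] using h2
        exact hx1 ▸ H.one_mem)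
    exact ⟨by rw [← heq]; exact hfi.index_ne_zero⟩
  · left
    obtain ⟨g, hg⟩ : ∃ g : G, g ∉ ⋃ p ∈ F ×ˢ F, (p.1⁻¹ * p.2) •
        ((H.map (MulAut.conj p.2⁻¹).toMonoidHom : Subgroup G) : Set G) := by
      by_contra h
      push_neg at h
      exact hcov (Set.eq_univ_of_forall h)
    refine hfin_mono ?_ (hae g)
    intro y hy
    left
    refine ⟨hy, ?_⟩
    rintro ⟨x, hx, z, rfl, rfl⟩
    apply hg
    have hxF := hF hx
    have hyF := hF hy
    simp only [Set.mem_iUnion, Set.mul_singleton, Set.mem_image, SetLike.mem_coe] at hxF hyF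
    obtain ⟨a, ha, u, hu, hua⟩ := hxF
    obtain ⟨b, hb, v, hv, hvb⟩ := hyF
    simp only [Set.mem_iUnion]
    refine ⟨(a, b), Finset.mem_product.mpr ⟨ha, hb⟩, ?_⟩
    rw [Set.mem_smul_set]
    refine ⟨(MulAut.conj b⁻¹) (u⁻¹ * v), ⟨u⁻¹ * v, H.mul_mem (H.inv_mem hu) hv, rfl⟩, ?_⟩
    have hgz : a⁻¹ * (u⁻¹ * (v * b)) = z := by rw [hvb, ← hua]; group
    rw [← hgz]
    simp only [MulAut.conj_apply, smul_eq_mul]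
    group
end

section
/- Let G be a group and let X, Y ⊆ G with HX = X and KY = Y for subgroups H, K. If ∂X is H-finite, ∂Y is K-finite (in a Cayley graph of the finitely generated group G), and X is contained in a bounded neighbourhood of Y while X* is contained in a bounded neighbourhood of Y*, then ∂X is contained in a bounded neighbourhood of ∂Y. -/
open scoped Pointwise

/-- The boundary of `X` with respect to the generating set `S`. -/
def bdry {G : Type*} [Group G] (S : Set G) (X : Set G) : Set G :=
  {x ∈ X | ∃ s ∈ S, x * s ∉ X}

/-- The `n`-neighbourhood of `A` in the Cayley graph of `G` with respect to
the symmetric generating set `S` is `A * (S ∪ {1})ⁿ`. -/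
def nbhd {G : Type*} [Group G] (S : Set G) (n : ℕ) (A : Set G) : Set G :=
  (A * (insert (1 : G) S) ^ n : Set G)

/-- Crossing lemma: a path from inside `Y` to outside `Y` crosses `bdry S Y`. -/
lemma cross_bdry {G : Type*} [Group G] (S : Set G)
    (hSsymm : ∀ s ∈ S, s⁻¹ ∈ S) (Y : Set G) :
    ∀ n : ℕ, ∀ v ∈ (insert (1 : G) S) ^ n, ∀ a : G, a ∈ Y → a * v ∉ Y →
      ∃ g ∈ bdry S Y, ∃ p ∈ (insert (1 : G) S) ^ n, a = g * p := by
  intro n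
  induction n with
  | zero =>
    intro v hv a ha hav
    rw [pow_zero, Set.mem_one] at hv
    subst hv
    rw [mul_one] at hav
    exact absurd ha hav
  | succ n ih =>
    intro v hv a ha hav
    rw [pow_succ'] at hv
    obtain ⟨t, ht, v', hv', rfl⟩ := hv
    have htinv : t⁻¹ ∈ insert (1 : G) S := by
      rcases ht with h | h
      · simp [h]
      · exact Set.mem_insert_of_mem _ (hSsymm t h)
    have hav' : a * (t * v') ∉ Y := hav
    by_cases hat : a * t ∈ Y
    · obtain ⟨g, hg, p, hp, hap⟩ := ih v' hv' (a * t) hat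
        (by rw [mul_assoc]; exact hav')
      refine ⟨g, hg, p * t⁻¹, ?_, by rw [← mul_assoc, ← hap]; group⟩
      rw [pow_succ]
      exact Set.mul_mem_mul hp htinv
    · have ht' : t ∈ S := by
        rcases ht with h | h
        · exact absurd (by simpa [h] using ha) hat
        · exact h
      refine ⟨a, ⟨ha, t, ht', hat⟩, 1, ?_, (mul_one a).symm⟩
      have h1 : (1 : G) ∈ insert (1 : G) S := Set.mem_insert _ _
      simpa using Set.pow_mem_pow h1 (n := n + 1)

theorem bdry_in_bounded_nbhd_of_bdry {G : Type*} [Group G] (S : Set G)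
    (hSfin : S.Finite) (hSsymm : ∀ s ∈ S, s⁻¹ ∈ S)
    (hSgen : Subgroup.closure S = (⊤ : Subgroup G))
    (H K : Subgroup G) (X Y : Set G)
    (hHX : (H : Set G) * X = X) (hKY : (K : Set G) * Y = Y)
    (hbX : HFinite H (bdry S X)) (hbY : HFinite K (bdry S Y))
    (hXY : ∃ m : ℕ, X ⊆ nbhd S m Y) (hXY' : ∃ m : ℕ, Xᶜ ⊆ nbhd S m Yᶜ) :
    ∃ R : ℕ, bdry S X ⊆ nbhd S R (bdry S Y) := by
  obtain ⟨m, hm⟩ := hXY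
  obtain ⟨m', hm'⟩ := hXY'
  refine ⟨m + 1 + m' + m, ?_⟩
  rintro x ⟨hx, s, hs, hxs⟩
  obtain ⟨y, hy, w, hw, hyw⟩ := hm hx
  obtain ⟨y', hy', w', hw', hy'w'⟩ := hm' hxs
  -- inverse of w' is in T^{m'}
  have hTinv : (insert (1 : G) S)⁻¹ = insert (1 : G) S := by
    ext a
    simp only [Set.mem_inv, Set.mem_insert_iff, inv_eq_one]
    constructor
    · rintro (h | h)
      · exact Or.inl h
      · exact Or.inr (by simpa using hSsymm _ h)
    · rintro (h | h)
      · exact Or.inl h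
      · exact Or.inr (hSsymm _ h)
  have hw'inv : w'⁻¹ ∈ (insert (1 : G) S) ^ m' := by
    have h1 : w'⁻¹ ∈ ((insert (1 : G) S) ^ m')⁻¹ := Set.inv_mem_inv.mpr hw'
    rwa [← inv_pow, hTinv] at h1
  -- the path word
  have hv : w * s * w'⁻¹ ∈ (insert (1 : G) S) ^ (m + 1 + m') := by
    rw [pow_add, pow_add, pow_one]
    exact Set.mul_mem_mul (Set.mul_mem_mul hw (Set.mem_insert_of_mem _ hs)) hw'inv
  have hyv : y * (w * s * w'⁻¹) ∉ Y := by
    have : y * (w * s * w'⁻¹) = y' := by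
      have h2 : y' * w' = x * s := hy'w'
      have hx' : y * w = x := hyw
      calc y * (w * s * w'⁻¹) = (y * w) * s * w'⁻¹ := by group
        _ = (x * s) * w'⁻¹ := by rw [hx']
        _ = (y' * w') * w'⁻¹ := by rw [h2]
        _ = y' := by group
    rw [this]
    exact hy'
  obtain ⟨g, hg, p, hp, hyp⟩ := cross_bdry S hSsymm Y (m + 1 + m') _ hv y hy hyv
  refine ⟨g, hg, p * w, ?_, ?_⟩
  · rw [pow_add]
    exact Set.mul_mem_mul hp hw
  · show g * (p * w) = x
    have hx' : y * w = x := hyw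
    rw [← mul_assoc, ← hyp, hx']
end

section
/- Let G be a finitely generated group with subgroups H and K, and let X and Y be nontrivial almost invariant subsets of G over H and K respectively. If X and Y are equivalent (i.e., X ∩ Y* and X* ∩ Y are both H-finite), then H and K are commensurable subgroups of G. -/
open scoped Pointwise

/-- `X` is `L`-almost invariant. -/
def AlmostInv {G : Type*} [Group G] (L : Subgroup G) (X : Set G) : Prop :=
  (L : Set G) * X = X ∧
    ∀ g : G, HFinite L ((X \ ((X * {g} : Set G))) ∪ (((X * {g} : Set G)) \ X))

/-!
Since `X ∩ Yᶜ` is `H`-finite but `X` is not, some `x₀ ∈ X` has `H x₀` disjoint from `X ∩ Yᶜ`,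
so `H x₀ ⊆ Y`; likewise some `x₁ ∈ Xᶜ` has `H x₁ ⊆ Yᶜ`. Then `H x₀ ⊆ Y \ Y x₁⁻¹ x₀`, which is
`K`-finite. Conversely, for `y₀ ∈ Y` and `y₁ ∈ Yᶜ`, every `k ∈ K` has `k y₀ ∈ Xᶜ ∩ Y`, or
`k y₁ ∈ X ∩ Yᶜ`, or `k y₀ ∈ X \ X y₁⁻¹ y₀`, so `K` is `H`-finite. A subgroup lying in finitely
many cosets of another one has finite relative index.
-/

section HFinite

variable {G : Type*} [Group G] {L : Subgroup G} {A B : Set G}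

lemma hFinite_iff_exists_finset :
    HFinite L A ↔ ∃ F : Finset G, ∀ a ∈ A, ∃ f ∈ F, a * f⁻¹ ∈ L := by
  simp [HFinite, Set.subset_def, Set.mul_singleton, Set.image_mul_right]

lemma HFinite.mono (hAB : A ⊆ B) (hB : HFinite L B) : HFinite L A :=
  let ⟨F, hF⟩ := hB
  ⟨F, hAB.trans hF⟩

lemma HFinite.union (hA : HFinite L A) (hB : HFinite L B) : HFinite L (A ∪ B) := by
  classical
  obtain ⟨F₁, hF₁⟩ := hA
  obtain ⟨F₂, hF₂⟩ := hB
  refine ⟨F₁ ∪ F₂, Set.union_subset (hF₁.trans ?_) (hF₂.trans ?_)⟩ <;>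
    exact Set.biUnion_subset_biUnion_left (by simp)

lemma HFinite.preimage_mul_right (hA : HFinite L A) (c : G) :
    HFinite L ((· * c) ⁻¹' A) := by
  classical
  obtain ⟨F, hF⟩ := hFinite_iff_exists_finset.mp hA
  refine hFinite_iff_exists_finset.mpr ⟨F.image (· * c⁻¹), fun a ha => ?_⟩
  obtain ⟨f, hf, hafL⟩ := hF _ ha
  exact ⟨f * c⁻¹, Finset.mem_image_of_mem _ hf, by simpa [mul_assoc] using hafL⟩

lemma Set.Nonempty.of_not_hFinite (hA : ¬ HFinite L A) : A.Nonempty := by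
  contrapose! hA
  exact ⟨∅, by simp [hA]⟩

lemma exists_forall_mul_notMem_of_not_hFinite {Z : Set G} (hA : ¬ HFinite L A)
    (hZ : HFinite L Z) : ∃ a ∈ A, ∀ h ∈ L, h * a ∉ Z := by
  obtain ⟨F, hF⟩ := hFinite_iff_exists_finset.mp hZ
  by_contra! hcover
  refine hA (hFinite_iff_exists_finset.mpr ⟨F, fun a ha => ?_⟩)
  obtain ⟨h, hh, hhaZ⟩ := hcover a ha
  obtain ⟨f, hf, hhafL⟩ := hF _ hhaZ
  exact ⟨f, hf, by simpa [mul_assoc] using L.mul_mem (L.inv_mem hh) hhafL⟩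

/-- Orbit–stabilizer for `M` acting on `G ⧸ L`: the orbit of the base coset consists of the cosets
`m L = f⁻¹ L`, of which there are finitely many. -/
lemma relIndex_ne_zero_of_hFinite {M : Subgroup G} (hM : HFinite L M) : L.relIndex M ≠ 0 := by
  classical
  obtain ⟨F, hF⟩ := hFinite_iff_exists_finset.mp hM
  have hstab : MulAction.stabilizer M ((1 : G) : G ⧸ L) = L.subgroupOf M := by
    ext m
    change (m : G) • ((1 : G) : G ⧸ L) = ((1 : G) : G ⧸ L) ↔ (m : G) ∈ L
    rw [MulAction.Quotient.smul_coe, smul_eq_mul, mul_one, QuotientGroup.eq, mul_one, inv_mem_iff]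
  have horbit : MulAction.orbit M ((1 : G) : G ⧸ L) ⊆ F.image fun f => ((f⁻¹ : G) : G ⧸ L) := by
    rintro _ ⟨m, rfl⟩
    obtain ⟨f, hf, hmf⟩ := hF _ (M.inv_mem m.2)
    refine Finset.mem_coe.mpr (Finset.mem_image.mpr ⟨f, hf, ?_⟩)
    change ((f⁻¹ : G) : G ⧸ L) = (m : G) • ((1 : G) : G ⧸ L)
    rw [MulAction.Quotient.smul_coe, smul_eq_mul, mul_one, QuotientGroup.eq]
    simpa using L.inv_mem hmf
  rw [Subgroup.relIndex, ← hstab, MulAction.index_stabilizer]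
  exact Set.ncard_ne_zero_of_mem (MulAction.mem_orbit_self _)
    ((F.image _).finite_toSet.subset horbit)

end HFinite

section AlmostInv

variable {G : Type*} [Group G] {H K : Subgroup G} {X Y : Set G}

lemma AlmostInv.mul_mem (hX : AlmostInv H X) {h x : G} (hh : h ∈ H) (hx : x ∈ X) : h * x ∈ X :=
  hX.1 ▸ Set.mul_mem_mul hh hx

lemma AlmostInv.mul_mem_iff (hX : AlmostInv H X) {h x : G} (hh : h ∈ H) : h * x ∈ X ↔ x ∈ X :=
  ⟨fun hhx => by simpa using hX.mul_mem (H.inv_mem hh) hhx, hX.mul_mem hh⟩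

lemma AlmostInv.hFinite_setOf_mul_mem_and_mul_notMem (hX : AlmostInv H X) (a b : G) :
    HFinite H {s | s * a ∈ X ∧ s * b ∉ X} := by
  refine ((hX.2 (b⁻¹ * a)).preimage_mul_right a).mono ?_
  rintro s ⟨hsa, hsb⟩
  refine Or.inl ⟨hsa, fun hsX => hsb ?_⟩
  simpa [Set.mul_singleton, Set.image_mul_right, mul_assoc] using hsX

lemma hFinite_of_equiv_of_not_hFinite (hX : AlmostInv H X)
    (hXnt : ¬ HFinite H X ∧ ¬ HFinite H Xᶜ) (hY : AlmostInv K Y)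
    (hEquiv : HFinite H (X ∩ Yᶜ) ∧ HFinite H (Xᶜ ∩ Y)) : HFinite K H := by
  obtain ⟨x₀, hx₀, hHx₀⟩ := exists_forall_mul_notMem_of_not_hFinite hXnt.1 hEquiv.1
  obtain ⟨x₁, hx₁, hHx₁⟩ := exists_forall_mul_notMem_of_not_hFinite hXnt.2 hEquiv.2
  refine (hY.hFinite_setOf_mul_mem_and_mul_notMem x₀ x₁).mono fun h hh => ?_
  constructor
  · by_contra hy
    exact hHx₀ h hh ⟨hX.mul_mem hh hx₀, hy⟩
  · exact fun hy => hHx₁ h hh ⟨(hX.mul_mem_iff hh).not.mpr hx₁, hy⟩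

lemma hFinite_of_equiv_of_nonempty (hX : AlmostInv H X) (hY : AlmostInv K Y)
    (hy₀ : Y.Nonempty) (hy₁ : Yᶜ.Nonempty)
    (hEquiv : HFinite H (X ∩ Yᶜ) ∧ HFinite H (Xᶜ ∩ Y)) : HFinite H K := by
  obtain ⟨y₀, hy₀⟩ := hy₀
  obtain ⟨y₁, hy₁⟩ := hy₁
  refine (((hEquiv.2.preimage_mul_right y₀).union (hEquiv.1.preimage_mul_right y₁)).union
    (hX.hFinite_setOf_mul_mem_and_mul_notMem y₀ y₁)).mono fun k hk => ?_
  have hky₀ : k * y₀ ∈ Y := hY.mul_mem hk hy₀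
  have hky₁ : k * y₁ ∉ Y := (hY.mul_mem_iff hk).not.mpr hy₁
  by_cases hkx₀ : k * y₀ ∈ X <;> by_cases hkx₁ : k * y₁ ∈ X <;> simp_all

end AlmostInv

theorem commensurable_of_equivalent_general {G : Type*} [Group G]
    (H K : Subgroup G) (X Y : Set G)
    (hX : AlmostInv H X) (hXnt : ¬ HFinite H X ∧ ¬ HFinite H Xᶜ)
    (hY : AlmostInv K Y) (hYnt : ¬ HFinite K Y ∧ ¬ HFinite K Yᶜ)
    (hEquiv : HFinite H (X ∩ Yᶜ) ∧ HFinite H (Xᶜ ∩ Y)) :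
    (H ⊓ K).relIndex H ≠ 0 ∧ (H ⊓ K).relIndex K ≠ 0 := by
  rw [Subgroup.inf_relIndex_left, Subgroup.inf_relIndex_right]
  exact ⟨relIndex_ne_zero_of_hFinite (hFinite_of_equiv_of_not_hFinite hX hXnt hY hEquiv),
    relIndex_ne_zero_of_hFinite <| hFinite_of_equiv_of_nonempty hX hY
      (.of_not_hFinite hYnt.1) (.of_not_hFinite hYnt.2) hEquiv⟩

theorem commensurable_of_equivalent {G : Type*} [Group G] (hG : Group.FG G)
    (H K : Subgroup G) (X Y : Set G)
    (hX : AlmostInv H X) (hXnt : ¬ HFinite H X ∧ ¬ HFinite H Xᶜ)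
    (hY : AlmostInv K Y) (hYnt : ¬ HFinite K Y ∧ ¬ HFinite K Yᶜ)
    (hEquiv : HFinite H (X ∩ Yᶜ) ∧ HFinite H (Xᶜ ∩ Y)) :
    (H ⊓ K).relIndex H ≠ 0 ∧ (H ⊓ K).relIndex K ≠ 0 :=
  commensurable_of_equivalent_general H K X Y hX hXnt hY hYnt hEquiv
end
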